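/- Let (X, 𝓜, μ) be a measure space equipped with a doubling ball-basis 𝔅 and fix 1 ≤ r < ∞. Then there is an admissible constant c such that for every f ∈ L^r_loc(X) and all balls A, B ∈ 𝔅 with A ∩ B ≠ ∅ and μ(A) ≤ μ(B), one has ⟨f − f_A⟩_B ≤ c · (1 + log₂(μ(B)/μ(A))) · ⟨f⟩*_{#,A}. -/

import Mathlib

open MeasureTheory Set
open scoped ENNReal NNReal symmDiff

variable {X : Type*}

structure IsBallBasis [MeasurableSpace X] (μ : Measure X) (𝔅 : Set (Set X))
    (hull : Set X → Set X) (K : ℝ) : Prop where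
  measurableSet : ∀ B ∈ 𝔅, MeasurableSet B
  measure_pos : ∀ B ∈ 𝔅, 0 < μ B
  measure_lt_top : ∀ B ∈ 𝔅, μ B < ∞
  exists_ball : ∀ x y : X, ∃ B ∈ 𝔅, x ∈ B ∧ y ∈ B
  approx : ∀ E : Set X, MeasurableSet E → ∀ ε : ℝ≥0∞, 0 < ε →
    ∃ 𝒞 ⊆ 𝔅, 𝒞.Countable ∧ μ (E ∆ ⋃₀ 𝒞) < ε
  hull_mem : ∀ B ∈ 𝔅, hull B ∈ 𝔅
  hull_measure : ∀ B ∈ 𝔅, μ (hull B) ≤ ENNReal.ofReal K * μ B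
  subset_hull : ∀ B ∈ 𝔅, ∀ A ∈ 𝔅, μ A ≤ 2 * μ B → (A ∩ B).Nonempty → A ⊆ hull B

def IsDoublingBasis [MeasurableSpace X] (μ : Measure X) (𝔅 : Set (Set X))
    (hull : Set X → Set X) (η : ℝ) : Prop :=
  ∀ B ∈ 𝔅, hull B ≠ Set.univ →
    ∃ B' ∈ 𝔅, B ⊆ B' ∧ 2 * μ B ≤ μ B' ∧ μ B' ≤ ENNReal.ofReal η * μ B

def IsRegularBasis [MeasurableSpace X] (μ : Measure X) (𝔅 : Set (Set X))
    (hull : Set X → Set X) (θ : ℝ) : Prop :=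
  ∀ A ∈ 𝔅, ∀ B ∈ 𝔅, μ B ≤ μ A → (B ∩ A).Nonempty →
    ENNReal.ofReal θ * μ (hull B) ≤ μ (hull B ∩ A)

/-- The mean `f_B` of `f` over a set `B`. -/
noncomputable def mean [MeasurableSpace X] (μ : Measure X) (f : X → ℝ) (B : Set X) : ℝ :=
  (∫ x in B, f x ∂μ) / (μ B).toReal

/-- `⟨f⟩_B`, the `L^r` average of `f` over `B`, valued in `ℝ≥0∞`. -/
noncomputable def avgNorm [MeasurableSpace X] (μ : Measure X) (r : ℝ) (f : X → ℝ) (B : Set X) :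
    ℝ≥0∞ :=
  ((∫⁻ x in B, ENNReal.ofReal |f x| ^ r ∂μ) / μ B) ^ (1 / r)

/-- `⟨f⟩_{#,B}`. -/
noncomputable def sharpNorm [MeasurableSpace X] (μ : Measure X) (r : ℝ) (f : X → ℝ) (B : Set X) :
    ℝ≥0∞ :=
  avgNorm μ r (fun x => f x - mean μ f B) B

/-- `⟨f⟩*_{#,B}`. -/
noncomputable def sharpStar [MeasurableSpace X] (μ : Measure X) (𝔅 : Set (Set X)) (r : ℝ)
    (f : X → ℝ) (B : Set X) : ℝ≥0∞ :=
  ⨆ (A : Set X) (_ : A ∈ 𝔅 ∧ B ⊆ A), sharpNorm μ r f A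

/-- `⟨f⟩*_B`. -/
noncomputable def avgStar [MeasurableSpace X] (μ : Measure X) (𝔅 : Set (Set X)) (r : ℝ)
    (f : X → ℝ) (B : Set X) : ℝ≥0∞ :=
  ⨆ (A : Set X) (_ : A ∈ 𝔅 ∧ B ⊆ A), avgNorm μ r f A

/-- essential oscillation `OSC_E(f)` of a measurable function. -/
noncomputable def oscE [MeasurableSpace X] (μ : Measure X) (f : X → ℝ) (E : Set X) : ℝ≥0∞ :=
  essSup (fun p : X × X => ENNReal.ofReal |f p.1 - f p.2|) ((μ.restrict E).prod (μ.restrict E))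

/-- pointwise oscillation `sup_{x,x'∈E} |g x − g x'|` of an arbitrary function. -/
noncomputable def oscSup (g : X → ℝ) (E : Set X) : ℝ≥0∞ :=
  ⨆ (x : X) (_ : x ∈ E) (y : X) (_ : y ∈ E), ENNReal.ofReal |g x - g y|

/-- `OSC_{B,β}(g)` for a possibly non-measurable `g`. -/
noncomputable def oscBeta [MeasurableSpace X] (μ : Measure X) (g : X → ℝ) (B : Set X) (β : ℝ) :
    ℝ≥0∞ :=
  ⨅ (E : Set X) (_ : MeasurableSet E ∧ E ⊆ B ∧ ENNReal.ofReal β * μ B < μ E), oscSup g E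

/-- `OSC_{B,α}(f)` for measurable `f` (essential-oscillation version). -/
noncomputable def oscAlpha [MeasurableSpace X] (μ : Measure X) (f : X → ℝ) (B : Set X) (α : ℝ) :
    ℝ≥0∞ :=
  ⨅ (E : Set X) (_ : MeasurableSet E ∧ E ⊆ B ∧ ENNReal.ofReal α * μ B < μ E), oscE μ f E

/-- the `L^r` norm. -/
noncomputable def lrNorm [MeasurableSpace X] (μ : Measure X) (r : ℝ) (f : X → ℝ) : ℝ≥0∞ :=
  (∫⁻ x, ENNReal.ofReal |f x| ^ r ∂μ) ^ (1 / r)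

/-- membership in `L^r(X)`. -/
def MemLr [MeasurableSpace X] (μ : Measure X) (r : ℝ) (f : X → ℝ) : Prop :=
  AEMeasurable f μ ∧ lrNorm μ r f < ∞

/-- the weak `L^{r,∞}` (outer-measure) quasinorm of a possibly non-measurable function. -/
noncomputable def wnorm [MeasurableSpace X] (μ : Measure X) (r : ℝ) (g : X → ℝ) : ℝ≥0∞ :=
  ⨆ (t : ℝ) (_ : 0 < t), ENNReal.ofReal t * μ {x | t < |g x|} ^ (1 / r)

/-- `‖T‖_{L^r → L^{r,∞}}`. -/
noncomputable def opWeakNorm [MeasurableSpace X] (μ : Measure X) (r : ℝ)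
    (T : (X → ℝ) → X → ℝ) : ℝ≥0∞ :=
  ⨆ (f : X → ℝ) (_ : MemLr μ r f ∧ lrNorm μ r f ≠ 0), wnorm μ r (T f) / lrNorm μ r f

/-- `T` is a `BO_ω` operator with constant `L`. -/
def IsBO [MeasurableSpace X] (μ : Measure X) (𝔅 : Set (Set X)) (hull : Set X → Set X)
    (r : ℝ) (ω : ℝ → ℝ) (T : (X → ℝ) → X → ℝ) (L : ℝ≥0∞) : Prop :=
  (∀ f g : X → ℝ, MemLr μ r f → MemLr μ r g →
      ∀ᵐ x ∂μ, |T (f + g) x| ≤ |T f x| + |T g x|) ∧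
  ∀ f : X → ℝ, MemLr μ r f → ∀ B ∈ 𝔅,
    oscE μ (T (Set.indicator (hull B)ᶜ f)) B ≤
      L * ⨆ (A : Set X) (_ : A ∈ 𝔅 ∧ B ⊆ A),
        ENNReal.ofReal (ω ((μ A).toReal / (μ B).toReal)) * avgNorm μ r f A

/-- `T` is linear on `L^r` (a.e.). -/
def IsLinearOnLr [MeasurableSpace X] (μ : Measure X) (r : ℝ) (T : (X → ℝ) → X → ℝ) : Prop :=
  (∀ f g : X → ℝ, MemLr μ r f → MemLr μ r g →
      ∀ᵐ x ∂μ, T (f + g) x = T f x + T g x) ∧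
  (∀ (c : ℝ) (f : X → ℝ), MemLr μ r f → ∀ᵐ x ∂μ, T (c • f) x = c * T f x)

/-- a family of operators is uniformly vanishing. -/
def UniformlyVanishing {ι : Type*} [MeasurableSpace X] (μ : Measure X) (𝔅 : Set (Set X))
    (T : ι → (X → ℝ) → X → ℝ) : Prop :=
  ∀ B ∈ 𝔅, ∀ ε : ℝ, 0 < ε → ∃ B' ∈ 𝔅, B ⊆ B' ∧
    ∀ α, ∀ B'' ∈ 𝔅, B' ⊆ B'' →
      oscE μ (T α (Set.indicator B'' fun _ => (1 : ℝ))) B ≤ ENNReal.ofReal ε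
/-- membership in `L^r_loc(X)`. -/
def MemLrLoc [MeasurableSpace X] (μ : Measure X) (𝔅 : Set (Set X)) (r : ℝ) (f : X → ℝ) : Prop :=
  AEMeasurable f μ ∧ ∀ B ∈ 𝔅, (∫⁻ x in B, ENNReal.ofReal |f x| ^ r ∂μ) < ∞

/-! Normalising `μ.restrict B` to the probability measure `μ[|B]` turns `⟨g⟩_B` into an `L^r` norm
and `f_B` into an integral, so Minkowski and Hölder give `⟨f - c'⟩_B ≤ ⟨f - c⟩_B + |c - c'|` and
`|f_D - f_A| ≲ ⟨f⟩_{#,D}` for `A ⊆ D` of comparable measure. If `B` lies in the hull `A*` of `A`,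
passing through `f_{A*}` bounds `⟨f - f_A⟩_B` by a multiple of `⟨f⟩*_{#,A}`. Otherwise the doubling
property replaces `A` by a ball `A' ⊇ A` of at least twice the measure, at the cost of one more
such multiple; after at most `⌈log₂ (μ B / μ A)⌉` steps `B` lies in the hull. -/

open scoped ProbabilityTheory

section Averages

variable [MeasurableSpace X] {μ : Measure X} {r : ℝ}

theorem avgNorm_eq_eLpNorm_cond (hr : 0 < r) (g : X → ℝ) (B : Set X) :
    avgNorm μ r g B = eLpNorm g (ENNReal.ofReal r) μ[|B] := by
  rw [eLpNorm_eq_lintegral_rpow_enorm_toReal (by simpa using hr) ENNReal.ofReal_ne_top,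
    ENNReal.toReal_ofReal hr.le, ProbabilityTheory.cond, lintegral_smul_measure, avgNorm,
    ENNReal.div_eq_inv_mul]
  simp only [Real.enorm_eq_ofReal_abs, smul_eq_mul]

theorem mean_eq_integral_cond (f : X → ℝ) (B : Set X) : mean μ f B = ∫ x, f x ∂μ[|B] := by
  rw [ProbabilityTheory.cond, integral_smul_measure, mean, ENNReal.toReal_inv, smul_eq_mul,
    div_eq_inv_mul]

theorem avgNorm_sub_le_avgNorm_sub_add (hr : 1 ≤ r) {f : X → ℝ} {B : Set X}
    (hf : AEMeasurable f (μ.restrict B)) (hB0 : μ B ≠ 0) (hBt : μ B ≠ ∞) (c c' : ℝ) :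
    avgNorm μ r (fun x => f x - c') B ≤
      avgNorm μ r (fun x => f x - c) B + ENNReal.ofReal |c - c'| := by
  have := ProbabilityTheory.cond_isProbabilityMeasure_of_finite hB0 hBt
  have hr0 : 0 < r := one_pos.trans_le hr
  have hf' : AEStronglyMeasurable f μ[|B] :=
    (hf.smul_measure _).aestronglyMeasurable
  simp only [avgNorm_eq_eLpNorm_cond hr0]
  calc eLpNorm (fun x => f x - c') (ENNReal.ofReal r) μ[|B]
      = eLpNorm ((fun x => f x - c) + fun _ => c - c') (ENNReal.ofReal r) μ[|B] := by
        congr 1; ext x; simp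
    _ ≤ _ := eLpNorm_add_le (hf'.sub aestronglyMeasurable_const) aestronglyMeasurable_const
        (by simpa using hr)
    _ = _ := by
        rw [eLpNorm_const _ (by simpa using hr0) (IsProbabilityMeasure.ne_zero _), measure_univ,
          ENNReal.one_rpow, mul_one, Real.enorm_eq_ofReal_abs]

theorem ofReal_abs_mean_le_avgNorm (hr : 1 ≤ r) {g : X → ℝ} {B : Set X}
    (hg : AEMeasurable g (μ.restrict B)) (hB0 : μ B ≠ 0) (hBt : μ B ≠ ∞) :
    ENNReal.ofReal |mean μ g B| ≤ avgNorm μ r g B := by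
  have := ProbabilityTheory.cond_isProbabilityMeasure_of_finite hB0 hBt
  rw [avgNorm_eq_eLpNorm_cond (one_pos.trans_le hr), mean_eq_integral_cond,
    ← Real.enorm_eq_ofReal_abs]
  calc ‖∫ x, g x ∂μ[|B]‖ₑ ≤ eLpNorm g 1 μ[|B] := by
        rw [eLpNorm_one_eq_lintegral_enorm]; exact enorm_integral_le_lintegral_enorm _
    _ ≤ _ := eLpNorm_le_eLpNorm_of_exponent_le (by simpa using hr)
        (hg.smul_measure _).aestronglyMeasurable

theorem avgNorm_le_rpow_mul_avgNorm_of_subset (hr : 0 ≤ r) (g : X → ℝ) {B D : Set X}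
    (hBD : B ⊆ D) (hD0 : μ D ≠ 0) (hDt : μ D ≠ ∞) :
    avgNorm μ r g B ≤ (μ D / μ B) ^ (1 / r) * avgNorm μ r g D := by
  rw [avgNorm, avgNorm, ← ENNReal.mul_rpow_of_nonneg _ _ (by positivity)]
  gcongr
  calc (∫⁻ x in B, ENNReal.ofReal |g x| ^ r ∂μ) / μ B
      ≤ (∫⁻ x in D, ENNReal.ofReal |g x| ^ r ∂μ) / μ B := by gcongr
    _ = μ D / μ B * ((∫⁻ x in D, ENNReal.ofReal |g x| ^ r ∂μ) / μ D) := by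
        rw [mul_comm, ← mul_div_assoc, ENNReal.div_mul_cancel hD0 hDt]

theorem mean_sub_const {f : X → ℝ} {B : Set X} (hf : IntegrableOn f B μ) (hB0 : μ B ≠ 0)
    (hBt : μ B ≠ ∞) (c : ℝ) : mean μ (fun x => f x - c) B = mean μ f B - c := by
  have := ProbabilityTheory.cond_isProbabilityMeasure_of_finite hB0 hBt
  have hf' : Integrable f μ[|B] := hf.smul_measure (ENNReal.inv_ne_top.2 hB0)
  simp only [mean_eq_integral_cond]
  rw [integral_sub hf' (integrable_const c), integral_const, probReal_univ, one_smul]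

theorem ofReal_abs_mean_sub_mean_le (hr : 1 ≤ r) {f : X → ℝ} {A D : Set X} (hAD : A ⊆ D)
    (hf : IntegrableOn f A μ) (hA0 : μ A ≠ 0) (hAt : μ A ≠ ∞) (hD0 : μ D ≠ 0) (hDt : μ D ≠ ∞) :
    ENNReal.ofReal |mean μ f D - mean μ f A| ≤ (μ D / μ A) ^ (1 / r) * sharpNorm μ r f D := by
  have hmean : mean μ f D - mean μ f A = -mean μ (fun x => f x - mean μ f D) A := by
    rw [mean_sub_const hf hA0 hAt]; ring
  rw [hmean, abs_neg]
  calc ENNReal.ofReal |mean μ (fun x => f x - mean μ f D) A|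
      ≤ avgNorm μ r (fun x => f x - mean μ f D) A :=
        ofReal_abs_mean_le_avgNorm hr (hf.aemeasurable.sub_const _) hA0 hAt
    _ ≤ (μ D / μ A) ^ (1 / r) * sharpNorm μ r f D :=
        avgNorm_le_rpow_mul_avgNorm_of_subset (by linarith) _ hAD hD0 hDt

theorem ENNReal.rpow_one_div_le_of_le {x M : ℝ≥0∞} (hr : 1 ≤ r) (hx : x ≤ M) (hM : 1 ≤ M) :
    x ^ (1 / r) ≤ M :=
  calc x ^ (1 / r) ≤ M ^ (1 / r) := ENNReal.rpow_le_rpow hx (by positivity)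
    _ ≤ M ^ (1 : ℝ) := ENNReal.rpow_le_rpow_of_exponent_le hM (by
        rw [div_le_one (by linarith)]; exact hr)
    _ = M := ENNReal.rpow_one M

end Averages

theorem MemLrLoc.integrableOn [MeasurableSpace X] {μ : Measure X} {𝔅 : Set (Set X)} {r : ℝ}
    {f : X → ℝ} (hr : 1 ≤ r) (hf : MemLrLoc μ 𝔅 r f) {B : Set X} (hB : B ∈ 𝔅) (hBt : μ B ≠ ∞) :
    IntegrableOn f B μ := by
  have : IsFiniteMeasure (μ.restrict B) := isFiniteMeasure_restrict.2 hBt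
  have hr0 : 0 < r := one_pos.trans_le hr
  refine MemLp.integrable (q := ENNReal.ofReal r) (by simpa using hr)
    ⟨hf.1.restrict.aestronglyMeasurable, ?_⟩
  rw [eLpNorm_eq_lintegral_rpow_enorm_toReal (by simpa using hr0) ENNReal.ofReal_ne_top,
    ENNReal.toReal_ofReal hr0.le]
  simp only [Real.enorm_eq_ofReal_abs]
  exact ENNReal.rpow_lt_top_of_nonneg (by positivity) (hf.2 B hB).ne

/-- Dominates `K η`, `K` and `η`, which bound the measure ratios of the balls compared below. -/
noncomputable def oscConst (K η : ℝ) : ℝ≥0∞ := (1 + ENNReal.ofReal K) * ENNReal.ofReal η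

theorem one_le_oscConst (K : ℝ) {η : ℝ} (hη : 1 ≤ η) : 1 ≤ oscConst K η :=
  one_le_mul_of_one_le_of_one_le le_self_add (by simpa using hη)

theorem oscConst_ne_top (K η : ℝ) : oscConst K η ≠ ∞ := by
  simp [oscConst, ENNReal.mul_ne_top]

theorem ofReal_le_oscConst {K η : ℝ} : ENNReal.ofReal η ≤ oscConst K η :=
  le_mul_of_one_le_left' le_self_add

section BallBasis

variable [MeasurableSpace X] {μ : Measure X} {𝔅 : Set (Set X)} {hull : Set X → Set X}
  {K η r : ℝ} {f : X → ℝ} {A B D : Set X}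

theorem sharpNorm_le_sharpStar (hD : D ∈ 𝔅) (hAD : A ⊆ D) :
    sharpNorm μ r f D ≤ sharpStar μ 𝔅 r f A :=
  le_iSup₂ (f := fun D (_ : D ∈ 𝔅 ∧ A ⊆ D) => sharpNorm μ r f D) D ⟨hD, hAD⟩

theorem sharpStar_anti (hAB : A ⊆ B) : sharpStar μ 𝔅 r f B ≤ sharpStar μ 𝔅 r f A :=
  iSup₂_le fun _ hD => sharpNorm_le_sharpStar hD.1 (hAB.trans hD.2)

namespace IsBallBasis

theorem subset_hull_self (hb : IsBallBasis μ 𝔅 hull K) (hA : A ∈ 𝔅) : A ⊆ hull A :=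
  hb.subset_hull A hA A hA (le_mul_of_one_le_left zero_le one_le_two)
    (by simpa using nonempty_of_measure_ne_zero (hb.measure_pos A hA).ne')

theorem ofReal_abs_mean_sub_mean_le_mul_sharpStar (hb : IsBallBasis μ 𝔅 hull K) (hr : 1 ≤ r)
    (hf : MemLrLoc μ 𝔅 r f) (hA : A ∈ 𝔅) (hD : D ∈ 𝔅) (hAD : A ⊆ D) {M : ℝ≥0∞}
    (hDA : μ D ≤ M * μ A) (hM : 1 ≤ M) :
    ENNReal.ofReal |mean μ f D - mean μ f A| ≤ M * sharpStar μ 𝔅 r f A := by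
  have hAt := (hb.measure_lt_top A hA).ne
  calc ENNReal.ofReal |mean μ f D - mean μ f A|
      ≤ (μ D / μ A) ^ (1 / r) * sharpNorm μ r f D :=
        ofReal_abs_mean_sub_mean_le hr hAD (hf.integrableOn hr hA hAt)
          (hb.measure_pos A hA).ne' hAt (hb.measure_pos D hD).ne' (hb.measure_lt_top D hD).ne
    _ ≤ M * sharpStar μ 𝔅 r f A := by
        gcongr
        · exact ENNReal.rpow_one_div_le_of_le hr (ENNReal.div_le_of_le_mul hDA) hM
        · exact sharpNorm_le_sharpStar hD hAD

theorem avgNorm_sub_mean_le_of_subset_hull (hb : IsBallBasis μ 𝔅 hull K) (hr : 1 ≤ r)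
    (hη : 1 ≤ η) (hf : MemLrLoc μ 𝔅 r f) (hA : A ∈ 𝔅) (hB : B ∈ 𝔅) (hBA : B ⊆ hull A)
    (hAB : μ A ≤ ENNReal.ofReal η * μ B) :
    avgNorm μ r (fun x => f x - mean μ f A) B ≤ 2 * oscConst K η * sharpStar μ 𝔅 r f A := by
  have hA' := hb.hull_mem A hA
  have hM := one_le_oscConst K hη
  have hhull := hb.hull_measure A hA
  have hhullB : μ (hull A) ≤ oscConst K η * μ B :=
    calc μ (hull A) ≤ ENNReal.ofReal K * (ENNReal.ofReal η * μ B) := hhull.trans (by gcongr)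
      _ ≤ oscConst K η * μ B := by rw [← mul_assoc, oscConst]; gcongr; exact le_add_self
  have hhullA : μ (hull A) ≤ oscConst K η * μ A :=
    hhull.trans (by gcongr; exact le_add_self.trans (le_mul_of_one_le_right' (by simpa using hη)))
  calc avgNorm μ r (fun x => f x - mean μ f A) B
      ≤ avgNorm μ r (fun x => f x - mean μ f (hull A)) B
          + ENNReal.ofReal |mean μ f (hull A) - mean μ f A| :=
        avgNorm_sub_le_avgNorm_sub_add hr hf.1.restrict (hb.measure_pos B hB).ne'
          (hb.measure_lt_top B hB).ne _ _
    _ ≤ oscConst K η * sharpStar μ 𝔅 r f A + oscConst K η * sharpStar μ 𝔅 r f A := by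
        gcongr
        · calc avgNorm μ r (fun x => f x - mean μ f (hull A)) B
              ≤ (μ (hull A) / μ B) ^ (1 / r) * sharpNorm μ r f (hull A) :=
                avgNorm_le_rpow_mul_avgNorm_of_subset (by linarith) _ hBA
                  (hb.measure_pos _ hA').ne' (hb.measure_lt_top _ hA').ne
            _ ≤ oscConst K η * sharpStar μ 𝔅 r f A := by
                gcongr
                · exact ENNReal.rpow_one_div_le_of_le hr (ENNReal.div_le_of_le_mul hhullB) hM
                · exact sharpNorm_le_sharpStar hA' (hb.subset_hull_self hA)
        · exact hb.ofReal_abs_mean_sub_mean_le_mul_sharpStar hr hf hA hA' (hb.subset_hull_self hA)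
            hhullA hM
    _ = 2 * oscConst K η * sharpStar μ 𝔅 r f A := by rw [← two_mul, mul_assoc]

/-- `μ A ≤ η μ B`, unlike `μ A ≤ μ B`, survives replacing `A` by the doubled ball `A'`. -/
theorem avgNorm_sub_mean_le_of_le_two_pow (hb : IsBallBasis μ 𝔅 hull K)
    (hd : IsDoublingBasis μ 𝔅 hull η) (hr : 1 ≤ r) (hη : 1 ≤ η) (hf : MemLrLoc μ 𝔅 r f)
    (hB : B ∈ 𝔅) (n : ℕ) (hA : A ∈ 𝔅) (hAB : (A ∩ B).Nonempty)
    (hAη : μ A ≤ ENNReal.ofReal η * μ B) (hBA : μ B ≤ 2 ^ n * μ A) :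
    avgNorm μ r (fun x => f x - mean μ f A) B ≤
      2 * (n + 1) * oscConst K η * sharpStar μ 𝔅 r f A := by
  induction n generalizing A with
  | zero =>
    have hBA' : B ⊆ hull A := hb.subset_hull A hA B hB
      (by simpa using hBA.trans (le_mul_of_one_le_left zero_le one_le_two)) (inter_comm A B ▸ hAB)
    simpa using hb.avgNorm_sub_mean_le_of_subset_hull hr hη hf hA hB hBA' hAη
  | succ n ih =>
    by_cases hBA' : B ⊆ hull A
    · refine (hb.avgNorm_sub_mean_le_of_subset_hull hr hη hf hA hB hBA' hAη).trans ?_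
      gcongr
      exact le_mul_of_one_le_right' le_add_self
    have hlarge : 2 * μ A < μ B :=
      not_le.1 fun h => hBA' (hb.subset_hull A hA B hB h (inter_comm A B ▸ hAB))
    obtain ⟨A', hA', hAA', hA'low, hA'up⟩ := hd A hA fun h => hBA' (h ▸ subset_univ B)
    have hAB' : μ A ≤ μ B := (le_mul_of_one_le_left zero_le one_le_two).trans hlarge.le
    have hA'B : μ A' ≤ ENNReal.ofReal η * μ B := hA'up.trans (mul_le_mul_right hAB' _)
    have hBA'' : μ B ≤ 2 ^ n * μ A' :=
      calc μ B ≤ 2 ^ n * (2 * μ A) := by rwa [pow_succ, mul_assoc] at hBA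
        _ ≤ 2 ^ n * μ A' := by gcongr
    calc avgNorm μ r (fun x => f x - mean μ f A) B
        ≤ avgNorm μ r (fun x => f x - mean μ f A') B
            + ENNReal.ofReal |mean μ f A' - mean μ f A| :=
          avgNorm_sub_le_avgNorm_sub_add hr hf.1.restrict (hb.measure_pos B hB).ne'
            (hb.measure_lt_top B hB).ne _ _
      _ ≤ 2 * (n + 1) * oscConst K η * sharpStar μ 𝔅 r f A
            + 2 * oscConst K η * sharpStar μ 𝔅 r f A := by
          gcongr
          · exact (ih hA' (hAB.mono (inter_subset_inter_left B hAA')) hA'B hBA'').trans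
              (by gcongr; exact sharpStar_anti hAA')
          · refine (hb.ofReal_abs_mean_sub_mean_le_mul_sharpStar hr hf hA hA' hAA'
              (hA'up.trans (mul_le_mul_left ofReal_le_oscConst _)) (one_le_oscConst K hη)).trans ?_
            gcongr
            exact le_mul_of_one_le_left' one_le_two
      _ = 2 * ((n + 1 : ℕ) + 1) * oscConst K η * sharpStar μ 𝔅 r f A := by push_cast; ring

end IsBallBasis

end BallBasis

theorem ENNReal.le_two_pow_natCeil_logb_mul {a b : ℝ≥0∞} (ha0 : a ≠ 0) (ha : a ≠ ∞) (hb0 : b ≠ 0)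
    (hb : b ≠ ∞) : b ≤ 2 ^ ⌈Real.logb 2 (b.toReal / a.toReal)⌉₊ * a := by
  rw [← ENNReal.div_le_iff ha0 ha, ← ENNReal.ofReal_toReal (ENNReal.div_ne_top hb ha0),
    ENNReal.toReal_div, ← ENNReal.ofReal_ofNat 2, ← ENNReal.ofReal_pow zero_le_two]
  refine ENNReal.ofReal_le_ofReal ?_
  rw [← Real.rpow_natCast, ← Real.logb_le_iff_le_rpow (by norm_num : (1 : ℝ) < 2)
    (div_pos (ENNReal.toReal_pos hb0 hb) (ENNReal.toReal_pos ha0 ha))]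
  exact Nat.le_ceil _

theorem osc_log_bound_general (K η r : ℝ) (hη : 2 < η) (hr : 1 ≤ r) :
    ∃ c : ℝ≥0∞, 0 < c ∧ c ≠ ∞ ∧
      ∀ (X : Type) (_ : MeasurableSpace X) (μ : Measure X)
        (𝔅 : Set (Set X)) (hull : Set X → Set X),
        IsBallBasis μ 𝔅 hull K →
        IsDoublingBasis μ 𝔅 hull η →
        ∀ f : X → ℝ, MemLrLoc μ 𝔅 r f →
          ∀ A ∈ 𝔅, ∀ B ∈ 𝔅, (A ∩ B).Nonempty → μ A ≤ μ B →
            avgNorm μ r (fun x => f x - mean μ f A) B ≤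
              c * ENNReal.ofReal (1 + Real.logb 2 ((μ B).toReal / (μ A).toReal)) *
                sharpStar μ 𝔅 r f A := by
  have hη1 : 1 ≤ η := by linarith
  refine ⟨4 * oscConst K η, (zero_lt_one.trans_le (one_le_oscConst K hη1)).trans_le
    (le_mul_of_one_le_left' (by norm_num)), ENNReal.mul_ne_top (by norm_num) (oscConst_ne_top K η),
    ?_⟩
  intro X _ μ 𝔅 hull hb hd f hf A hA B hB hAB hμ
  have hA0 := (hb.measure_pos A hA).ne'
  have hAt := (hb.measure_lt_top A hA).ne
  have hB0 := (hb.measure_pos B hB).ne'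
  have hBt := (hb.measure_lt_top B hB).ne
  set L := Real.logb 2 ((μ B).toReal / (μ A).toReal)
  have hL : 0 ≤ L := Real.logb_nonneg one_lt_two
    ((one_le_div (ENNReal.toReal_pos hA0 hAt)).2 (ENNReal.toReal_mono hBt hμ))
  have hn : (⌈L⌉₊ : ℝ≥0∞) + 1 ≤ 2 * ENNReal.ofReal (1 + L) := by
    rw [← ENNReal.ofReal_natCast, ← ENNReal.ofReal_one, ← ENNReal.ofReal_add (by positivity)
      zero_le_one, ← ENNReal.ofReal_ofNat 2, ← ENNReal.ofReal_mul zero_le_two]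
    exact ENNReal.ofReal_le_ofReal (by linarith [Nat.ceil_lt_add_one hL])
  calc avgNorm μ r (fun x => f x - mean μ f A) B
      ≤ 2 * (⌈L⌉₊ + 1) * oscConst K η * sharpStar μ 𝔅 r f A :=
        hb.avgNorm_sub_mean_le_of_le_two_pow hd hr hη1 hf hB _ hA hAB
          (hμ.trans (le_mul_of_one_le_left' (by simpa using hη1)))
          (ENNReal.le_two_pow_natCeil_logb_mul hA0 hAt hB0 hBt)
    _ ≤ 2 * (2 * ENNReal.ofReal (1 + L)) * oscConst K η * sharpStar μ 𝔅 r f A := by gcongr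
    _ = 4 * oscConst K η * ENNReal.ofReal (1 + L) * sharpStar μ 𝔅 r f A := by ring

theorem osc_log_bound (K η r : ℝ) (hK : 0 < K) (hη : 2 < η) (hr : 1 ≤ r) :
    ∃ c : ℝ≥0∞, 0 < c ∧ c ≠ ∞ ∧
      ∀ (X : Type) (_ : MeasurableSpace X) (μ : Measure X)
        (𝔅 : Set (Set X)) (hull : Set X → Set X),
        IsBallBasis μ 𝔅 hull K →
        IsDoublingBasis μ 𝔅 hull η →
        ∀ f : X → ℝ, MemLrLoc μ 𝔅 r f →
          ∀ A ∈ 𝔅, ∀ B ∈ 𝔅, (A ∩ B).Nonempty → μ A ≤ μ B →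
            avgNorm μ r (fun x => f x - mean μ f A) B ≤
              c * ENNReal.ofReal (1 + Real.logb 2 ((μ B).toReal / (μ A).toReal)) *
                sharpStar μ 𝔅 r f A :=
  osc_log_bound_general K η r hη hr
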